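/- arXiv:1405.7761 — 2 statements merged into one kernel-verified Lean document; each statement's English description precedes it below -/
import Mathlib

section
/- Let V be a complex vector space of dimension 2m (m ≥ 1) equipped with a nondegenerate alternating bilinear form ⟨ , ⟩. Let λ be a partition contained in the m×m square and let F• be a full flag in V. Then the image of the Schubert variety X_λ F• under the Lagrangian involution equals the Schubert variety of the conjugate partition for the annihilator flag: {∠(H) | H ∈ X_λ F•} = X_{λ'} ∠(F•), where ∠(F•) is the full flag with i-th member ∠(F_{2m−i}). -/
open Module

/-- The annihilator `∠(W) = {v ∈ V | ⟨v,w⟩ = 0 for all w ∈ W}` of a subspace `W`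
with respect to a bilinear form `B`. -/
def ann {V : Type*} [AddCommGroup V] [Module ℂ V]
    (B : LinearMap.BilinForm ℂ V) (W : Submodule ℂ V) : Submodule ℂ V :=
  W.dualAnnihilator.comap B

/-- A full flag `F₀ = 0 ⊊ F₁ ⊊ ⋯ ⊊ F_{2m} = V` with `dim Fᵢ = i`. -/
def IsFullFlag (m : ℕ) {V : Type*} [AddCommGroup V] [Module ℂ V]
    (F : Fin (2 * m + 1) → Submodule ℂ V) : Prop :=
  F 0 = ⊥ ∧ F (Fin.last (2 * m)) = ⊤ ∧ StrictMono F ∧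
    ∀ i, finrank ℂ (F i) = (i : ℕ)

/-- The annihilator flag `∠(F•)`, whose `i`-th member is `∠(F_{2m-i})`. -/
def annFlag (m : ℕ) {V : Type*} [AddCommGroup V] [Module ℂ V]
    (B : LinearMap.BilinForm ℂ V) (F : Fin (2 * m + 1) → Submodule ℂ V) :
    Fin (2 * m + 1) → Submodule ℂ V :=
  fun i => ann B (F i.rev)

/-- The conjugate partition `λ'ⱼ = #{i | λᵢ ≥ j}` of a partition contained in the
`m × m` square, where `lam i` is the `(i+1)`-st part `λ_{i+1}`. -/
def conjugatePartition (m : ℕ) (lam : Fin m → ℕ) : Fin m → ℕ :=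
  fun j => (Finset.univ.filter fun i : Fin m => (j : ℕ) + 1 ≤ lam i).card

/-- The Schubert variety
`X_λ F• = {H | dim H = m and dim (H ∩ F_{m+i-λᵢ}) ≥ i for i = 1,…,m}`. -/
def SchubertVariety (m : ℕ) {V : Type*} [AddCommGroup V] [Module ℂ V]
    (lam : Fin m → ℕ) (F : Fin (2 * m + 1) → Submodule ℂ V) :
    Set (Submodule ℂ V) :=
  {H | finrank ℂ H = m ∧ ∀ i : Fin m,
    (i : ℕ) + 1 ≤
      finrank ℂ ↥(H ⊓ F ⟨m + ((i : ℕ) + 1) - lam i, by have := i.isLt; omega⟩)}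

section Aux

variable {V : Type*} [AddCommGroup V] [Module ℂ V]

lemma mem_ann {B : LinearMap.BilinForm ℂ V} {W : Submodule ℂ V} {x : V} :
    x ∈ ann B W ↔ ∀ w ∈ W, B x w = 0 := by
  simp [ann, Submodule.mem_comap, Submodule.mem_dualAnnihilator]

lemma ann_finrank_add [FiniteDimensional ℂ V] (B : LinearMap.BilinForm ℂ V)
    (hB : B.Nondegenerate) (W : Submodule ℂ V) :
    finrank ℂ (ann B W) + finrank ℂ W = finrank ℂ V := by
  have h : ann B W = W.dualAnnihilator.comap ((B.toDual hB : V ≃ₗ[ℂ] Module.Dual ℂ V) :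
      V →ₗ[ℂ] Module.Dual ℂ V) := rfl
  rw [h, Submodule.comap_equiv_eq_map_symm, LinearEquiv.finrank_map_eq]
  have h1 := LinearEquiv.finrank_eq (Subspace.quotEquivAnnihilator W)
  have h2 := Submodule.finrank_quotient_add_finrank W
  omega

lemma ann_sup (B : LinearMap.BilinForm ℂ V) (W W' : Submodule ℂ V) :
    ann B (W ⊔ W') = ann B W ⊓ ann B W' := by
  simp [ann, Submodule.dualAnnihilator_sup_eq, Submodule.comap_inf]

lemma ann_anti (B : LinearMap.BilinForm ℂ V) {W W' : Submodule ℂ V} (h : W ≤ W') :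
    ann B W' ≤ ann B W := fun x hx => by
  rw [mem_ann] at hx ⊢; exact fun w hw => hx w (h hw)

lemma ann_ann [FiniteDimensional ℂ V] (B : LinearMap.BilinForm ℂ V)
    (halt : B.IsAlt) (hB : B.Nondegenerate) (W : Submodule ℂ V) :
    ann B (ann B W) = W := by
  have hle : W ≤ ann B (ann B W) := by
    intro w hw
    rw [mem_ann]
    intro v hv
    rw [mem_ann] at hv
    have h1 := hv w hw
    have h2 := halt.neg_eq v w
    rw [h1] at h2
    simpa using h2.symm
  refine (Submodule.eq_of_le_of_finrank_le hle ?_).symm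
  have h1 := ann_finrank_add B hB W
  have h2 := ann_finrank_add B hB (ann B W)
  omega

lemma key_finrank [FiniteDimensional ℂ V] (B : LinearMap.BilinForm ℂ V)
    (hB : B.Nondegenerate) (H W : Submodule ℂ V) :
    finrank ℂ ↥(ann B H ⊓ ann B W) + finrank ℂ H + finrank ℂ W
      = finrank ℂ V + finrank ℂ ↥(H ⊓ W) := by
  rw [← ann_sup]
  have h1 := ann_finrank_add B hB (H ⊔ W)
  have h2 := Submodule.finrank_sup_add_finrank_inf_eq H W
  omega

end Aux

section Comb

lemma card_lt_aux {m c : ℕ} (hc : c ≤ m) :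
    (Finset.univ.filter fun j : Fin m => (j : ℕ) < c).card = c := by
  have h : (Finset.univ.filter fun j : Fin m => (j : ℕ) < c)
      = Finset.univ.map (Fin.castLEEmb hc) := by
    ext j
    simp only [Finset.mem_filter, Finset.mem_univ, true_and, Finset.mem_map]
    constructor
    · intro h
      refine ⟨⟨j, h⟩, ?_⟩
      ext
      simp
    · rintro ⟨a, rfl⟩
      simpa using a.isLt
  rw [h, Finset.card_map, Finset.card_univ, Fintype.card_fin]

lemma conj_ge_iff {m : ℕ} {lam : Fin m → ℕ} (hanti : Antitone lam) (i j : Fin m) :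
    (i : ℕ) + 1 ≤ conjugatePartition m lam j ↔ (j : ℕ) + 1 ≤ lam i := by
  unfold conjugatePartition
  constructor
  · intro h
    by_contra hc
    push_neg at hc
    have hsub : (Finset.univ.filter fun k : Fin m => (j : ℕ) + 1 ≤ lam k)
        ⊆ Finset.univ.filter fun k : Fin m => (k : ℕ) < (i : ℕ) := by
      intro k hk
      simp only [Finset.mem_filter, Finset.mem_univ, true_and] at hk ⊢
      by_contra hk2
      push_neg at hk2
      have := hanti (show i ≤ k by rwa [Fin.le_def])
      omega
    have h2 := Finset.card_le_card hsub
    rw [card_lt_aux (le_of_lt i.isLt)] at h2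
    omega
  · intro h
    have hsub : (Finset.univ.filter fun k : Fin m => (k : ℕ) < (i : ℕ) + 1)
        ⊆ Finset.univ.filter fun k : Fin m => (j : ℕ) + 1 ≤ lam k := by
      intro k hk
      simp only [Finset.mem_filter, Finset.mem_univ, true_and] at hk ⊢
      have := hanti (show k ≤ i by rw [Fin.le_def]; omega)
      omega
    have h2 := Finset.card_le_card hsub
    rwa [card_lt_aux (show (i : ℕ) + 1 ≤ m from i.isLt)] at h2

lemma conj_le {m : ℕ} (lam : Fin m → ℕ) (j : Fin m) : conjugatePartition m lam j ≤ m := by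
  have := Finset.card_filter_le Finset.univ (fun i : Fin m => (j : ℕ) + 1 ≤ lam i)
  simpa [conjugatePartition] using this

lemma conj_anti {m : ℕ} (lam : Fin m → ℕ) : Antitone (conjugatePartition m lam) := by
  intro j j' h
  apply Finset.card_le_card
  intro k hk
  simp only [Finset.mem_filter, Finset.mem_univ, true_and] at hk ⊢
  have : (j : ℕ) ≤ j' := h
  omega

lemma conj_conj {m : ℕ} {lam : Fin m → ℕ} (hanti : Antitone lam) (hle : ∀ i, lam i ≤ m) :
    conjugatePartition m (conjugatePartition m lam) = lam := by
  funext i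
  show (Finset.univ.filter fun j : Fin m =>
      (i : ℕ) + 1 ≤ conjugatePartition m lam j).card = lam i
  have h1 : (Finset.univ.filter fun j : Fin m => (i : ℕ) + 1 ≤ conjugatePartition m lam j)
      = Finset.univ.filter fun j : Fin m => (j : ℕ) < lam i :=
    Finset.filter_congr (fun j _ => by
      simpa using conj_ge_iff hanti i j)
  rw [h1, card_lt_aux (hle i)]

end Comb

section Flags

variable {V : Type*} [AddCommGroup V] [Module ℂ V] [FiniteDimensional ℂ V]

lemma annFlag_mono (m : ℕ) (B : LinearMap.BilinForm ℂ V)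
    (F : Fin (2 * m + 1) → Submodule ℂ V) (hF : Monotone F) :
    Monotone (annFlag m B F) := by
  intro i i' h
  exact ann_anti B (hF (by rwa [Fin.rev_le_rev]))

lemma annFlag_annFlag (m : ℕ) (B : LinearMap.BilinForm ℂ V)
    (halt : B.IsAlt) (hB : B.Nondegenerate) (F : Fin (2 * m + 1) → Submodule ℂ V) :
    annFlag m B (annFlag m B F) = F := by
  funext i
  show ann B (ann B (F i.rev.rev)) = F i
  rw [Fin.rev_rev, ann_ann B halt hB]

lemma forward (m : ℕ) (hm : 1 ≤ m) {V : Type*} [AddCommGroup V] [Module ℂ V]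
    [FiniteDimensional ℂ V] (hdim : finrank ℂ V = 2 * m)
    (B : LinearMap.BilinForm ℂ V) (hB : B.Nondegenerate)
    (lam : Fin m → ℕ) (hanti : Antitone lam)
    (F : Fin (2 * m + 1) → Submodule ℂ V) (hFmono : Monotone F)
    (hFrank : ∀ i, finrank ℂ (F i) = (i : ℕ))
    (H : Submodule ℂ V) (hH : H ∈ SchubertVariety m lam F) :
    ann B H ∈ SchubertVariety m (conjugatePartition m lam) (annFlag m B F) := by
  obtain ⟨hHm, hcond⟩ := hH
  have hannH := ann_finrank_add B hB H
  constructor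
  · omega
  intro j
  have hjm : (j : ℕ) < m := j.isLt
  have hμm : conjugatePartition m lam j ≤ m := conj_le lam j
  have hpf : m + ((j : ℕ) + 1) - conjugatePartition m lam j < 2 * m + 1 := by omega
  change (j : ℕ) + 1 ≤ finrank ℂ
    ↥(ann B H ⊓ ann B (F (Fin.rev ⟨m + ((j : ℕ) + 1) - conjugatePartition m lam j, hpf⟩)))
  generalize hK : (Fin.rev ⟨m + ((j : ℕ) + 1) - conjugatePartition m lam j, hpf⟩
      : Fin (2 * m + 1)) = K
  have hrev : (K : ℕ) = m + conjugatePartition m lam j - ((j : ℕ) + 1) := by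
    rw [← hK, Fin.val_rev]
    have : ((⟨m + ((j : ℕ) + 1) - conjugatePartition m lam j, hpf⟩ : Fin (2 * m + 1)) : ℕ)
        = m + ((j : ℕ) + 1) - conjugatePartition m lam j := rfl
    omega
  have hkey := key_finrank B hB H (F K)
  rw [hHm, hFrank K, hdim] at hkey
  have hd : conjugatePartition m lam j ≤ finrank ℂ ↥(H ⊓ F K) := by
    rcases Nat.eq_zero_or_pos (conjugatePartition m lam j) with h0 | hpos
    · omega
    · set μ := conjugatePartition m lam j with hμ
      have him : μ - 1 < m := by omega
      set i : Fin m := ⟨μ - 1, him⟩ with hi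
      have hlami : (j : ℕ) + 1 ≤ lam i := by
        refine (conj_ge_iff hanti i j).mp ?_
        show (μ - 1) + 1 ≤ μ
        omega
      have hci := hcond i
      have hidx : (⟨m + ((i : ℕ) + 1) - lam i, by have := i.isLt; omega⟩
          : Fin (2 * m + 1)) ≤ K := by
        rw [Fin.le_def]
        show m + ((μ - 1) + 1) - lam i ≤ (K : ℕ)
        omega
      have hmono : finrank ℂ ↥(H ⊓ F ⟨m + ((i : ℕ) + 1) - lam i, by have := i.isLt; omega⟩)
          ≤ finrank ℂ ↥(H ⊓ F K) :=
        Submodule.finrank_mono (inf_le_inf_left H (hFmono hidx))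
      have : (i : ℕ) = μ - 1 := rfl
      omega
  have hKle : (K : ℕ) + ((j : ℕ) + 1) = m + conjugatePartition m lam j := by omega
  omega

end Flags

theorem stmt3 (m : ℕ) (hm : 1 ≤ m) (V : Type*) [AddCommGroup V] [Module ℂ V]
    [FiniteDimensional ℂ V] (hdim : finrank ℂ V = 2 * m)
    (B : LinearMap.BilinForm ℂ V) (halt : B.IsAlt) (hB : B.Nondegenerate)
    (lam : Fin m → ℕ) (hanti : Antitone lam) (hle : ∀ i, lam i ≤ m)
    (F : Fin (2 * m + 1) → Submodule ℂ V) (hF : IsFullFlag m F) :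
    ann B '' SchubertVariety m lam F
      = SchubertVariety m (conjugatePartition m lam) (annFlag m B F) := by
  obtain ⟨hF0, hFtop, hFs, hFrank⟩ := hF
  have hannFrank : ∀ i : Fin (2 * m + 1), finrank ℂ (annFlag m B F i) = (i : ℕ) := by
    intro i
    have h1 := ann_finrank_add B hB (F i.rev)
    rw [hFrank i.rev, Fin.val_rev] at h1
    have := i.isLt
    show finrank ℂ ↥(ann B (F i.rev)) = (i : ℕ)
    omega
  ext W
  simp only [Set.mem_image]
  constructor
  · rintro ⟨H, hH, rfl⟩
    exact forward m hm hdim B hB lam hanti F hFs.monotone hFrank H hH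
  · intro hW
    have h2 := forward m hm hdim B hB (conjugatePartition m lam) (conj_anti lam)
      (annFlag m B F) (annFlag_mono m B F hFs.monotone) hannFrank W hW
    rw [annFlag_annFlag m B halt hB, conj_conj hanti hle] at h2
    exact ⟨ann B W, h2, ann_ann B halt hB W⟩
end

section
/- Let m ≥ 1 and let γ : ℂ → ℂ^{2m} be the rational normal (moment) curve γ(t) = (1, t, t², …, t^{2m−1}), with osculating flags F•(t) given by Fᵢ(t) = span{γ(t), γ'(t), …, γ^{(i−1)}(t)}. Then there exists a nondegenerate alternating bilinear form ⟨ , ⟩ on ℂ^{2m}, whose matrix in the standard basis has real entries, such that every osculating flag is isotropic: for all t ∈ ℂ and all 0 ≤ i ≤ 2m, ∠(F_{2m−i}(t)) = Fᵢ(t), where ∠(W) denotes the annihilator of W with respect to ⟨ , ⟩. -/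
/-!
Pair `ℂᴺ` with itself by the antidiagonal form `⟨x, y⟩ = ∑ₖ (-1)ᵏ C(N-1, k) xₖ y_{N-1-k}`,
chosen so that `⟨γ(s), γ(t)⟩ = (t - s)^(N-1)` by the binomial theorem. Differentiating `a` times
in `s` and `b` times in `t` and then setting `s = t` shows that `⟨γ^(a)(t), γ^(b)(t)⟩` vanishes
exactly when `a + b ≠ N - 1`. Hence `Fᵢ(t) ⊆ ∠(F_{N-i}(t))`; the same pairing shows that the
`γ^(j)(t)`, `j < N`, are independent, so `dim Fᵢ(t) = i` and the inclusion is an equality since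
`dim ∠(W) = N - dim W` for a nondegenerate form. For even `N` the coefficient of `xₖ y_{N-1-k}`
changes sign under `k ↦ N-1-k`, so the form is alternating.
-/

open Module

/-- The `j`-th (coordinatewise) derivative `γ^{(j)}(t)` of the rational normal
(moment) curve `γ : ℂ → ℂⁿ`, `γ(t) = (1, t, t², …, t^{n-1})`. -/
noncomputable def curveDeriv (n : ℕ) (j : ℕ) (t : ℂ) : Fin n → ℂ :=
  fun k => deriv^[j] (fun s : ℂ => s ^ (k : ℕ)) t

/-- The `i`-th osculating subspace `Fᵢ(t) = span{γ(t), γ'(t), …, γ^{(i-1)}(t)}`. -/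
noncomputable def oscSubspace (n : ℕ) (t : ℂ) (i : ℕ) : Submodule ℂ (Fin n → ℂ) :=
  Submodule.span ℂ (Set.range fun j : Fin i => curveDeriv n (j : ℕ) t)

lemma curveDeriv_apply (N j : ℕ) (t : ℂ) (k : Fin N) :
    curveDeriv N j t k = (k : ℕ).descFactorial j * t ^ ((k : ℕ) - j) := by
  simp [curveDeriv, ← iteratedDeriv_eq_iterate]

lemma hasDerivAt_curveDeriv (N j : ℕ) (t : ℂ) :
    HasDerivAt (curveDeriv N j) (curveDeriv N (j + 1) t) t := by
  refine hasDerivAt_pi.2 fun k => ?_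
  have hdiff : Differentiable ℂ (fun s => curveDeriv N j s k) := by
    simp only [curveDeriv_apply]; fun_prop
  simpa only [curveDeriv, Function.iterate_succ_apply'] using (hdiff t).hasDerivAt

lemma iteratedDeriv_map_curve {N : ℕ} (φ : (Fin N → ℂ) →ₗ[ℂ] ℂ) (j : ℕ) :
    iteratedDeriv j (fun s => φ (curveDeriv N 0 s)) = fun s => φ (curveDeriv N j s) := by
  induction j with
  | zero => rfl
  | succ j ih =>
    funext s
    rw [iteratedDeriv_succ, ih]
    exact ((LinearMap.toContinuousLinearMap φ).hasFDerivAt.comp_hasDerivAt s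
      (hasDerivAt_curveDeriv N j s)).deriv

def momentCoeff (N : ℕ) (k : Fin N) : ℤ := (-1) ^ (k : ℕ) * (N - 1).choose k

noncomputable def momentForm (N : ℕ) : LinearMap.BilinForm ℂ (Fin N → ℂ) :=
  LinearMap.mk₂ ℂ (fun x y => ∑ k, (momentCoeff N k : ℂ) * x k * y k.rev)
    (fun x x' y => by simp only [Pi.add_apply, add_mul, mul_add, Finset.sum_add_distrib])
    (fun c x y => by
      simp only [Pi.smul_apply, smul_eq_mul, Finset.mul_sum]
      exact Finset.sum_congr rfl fun _ _ => by ring)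
    (fun x y y' => by simp only [Pi.add_apply, mul_add, Finset.sum_add_distrib])
    (fun c x y => by
      simp only [Pi.smul_apply, smul_eq_mul, Finset.mul_sum]
      exact Finset.sum_congr rfl fun _ _ => by ring)

lemma momentForm_apply {N : ℕ} (x y : Fin N → ℂ) :
    momentForm N x y = ∑ k, (momentCoeff N k : ℂ) * x k * y k.rev := rfl

lemma momentForm_curve {N : ℕ} (hN : N ≠ 0) (s t : ℂ) :
    momentForm N (curveDeriv N 0 s) (curveDeriv N 0 t) = (t - s) ^ (N - 1) := by
  obtain ⟨n, rfl⟩ : ∃ n, N = n + 1 := ⟨N - 1, by omega⟩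
  rw [sub_eq_neg_add, add_pow, momentForm_apply, Nat.add_sub_cancel,
    ← Fin.sum_univ_eq_sum_range]
  refine Finset.sum_congr rfl fun k _ => ?_
  have hrev : ((k.rev : Fin (n + 1)) : ℕ) = n - k := by rw [Fin.val_rev]; omega
  simp only [curveDeriv, Function.iterate_zero, id, hrev, momentCoeff, Nat.add_sub_cancel]
  push_cast
  ring

lemma momentForm_curveDeriv {N : ℕ} (hN : N ≠ 0) (a b : ℕ) (s t : ℂ) :
    momentForm N (curveDeriv N a s) (curveDeriv N b t) =
      (-1) ^ a * ((N - 1).descFactorial b * (N - 1 - b).descFactorial a) *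
        (t - s) ^ (N - 1 - b - a) := by
  have inner (s' : ℂ) : momentForm N (curveDeriv N 0 s') (curveDeriv N b t) =
      (N - 1).descFactorial b * (t - s') ^ (N - 1 - b) := by
    rw [← congrFun (iteratedDeriv_map_curve (momentForm N (curveDeriv N 0 s')) b) t]
    simp only [momentForm_curve hN,
      iteratedDeriv_comp_sub_const (f := fun z : ℂ => z ^ (N - 1))]
    exact iteratedDeriv_pow _ _
  have outer := congrFun (iteratedDeriv_map_curve ((momentForm N).flip (curveDeriv N b t)) a) s
  simp only [LinearMap.BilinForm.flip_apply, inner, iteratedDeriv_const_mul_field,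
    iteratedDeriv_comp_const_sub (f := fun z : ℂ => z ^ (N - 1 - b)), iteratedDeriv_pow,
    smul_eq_mul] at outer
  rw [← outer]
  ring

lemma momentForm_curveDeriv_eq_zero_iff {N : ℕ} (hN : N ≠ 0) (a b : ℕ) (t : ℂ) :
    momentForm N (curveDeriv N a t) (curveDeriv N b t) = 0 ↔ a + b ≠ N - 1 := by
  simp only [momentForm_curveDeriv hN, sub_self, mul_eq_zero, pow_eq_zero_iff', Nat.cast_eq_zero,
    Nat.descFactorial_eq_zero_iff_lt, neg_eq_zero, one_ne_zero, false_and, false_or, ne_eq,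
    true_and]
  omega

lemma linearIndependent_curveDeriv {N : ℕ} (hN : N ≠ 0) (t : ℂ) :
    LinearIndependent ℂ fun j : Fin N => curveDeriv N j t := by
  refine Fintype.linearIndependent_iff.2 fun g hg i => ?_
  have hpair : momentForm N (∑ j, g j • curveDeriv N j t) (curveDeriv N (N - 1 - i) t) = 0 := by
    rw [hg, map_zero, LinearMap.zero_apply]
  simp only [map_sum, map_smul, LinearMap.sum_apply, LinearMap.smul_apply, smul_eq_mul] at hpair
  rw [Finset.sum_eq_single i (fun j _ hji => ?_) (by simp)] at hpair
  · exact (mul_eq_zero.1 hpair).resolve_right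
      fun h => (momentForm_curveDeriv_eq_zero_iff hN _ _ t).1 h (by omega)
  · rw [(momentForm_curveDeriv_eq_zero_iff hN _ _ t).2, mul_zero]
    have := Fin.val_ne_of_ne hji
    omega

lemma finrank_oscSubspace {N i : ℕ} (hN : N ≠ 0) (hi : i ≤ N) (t : ℂ) :
    finrank ℂ (oscSubspace N t i) = i := by
  have := (linearIndependent_curveDeriv hN t).comp (Fin.castLE hi) (Fin.castLE_injective hi)
  exact (finrank_span_eq_card this).trans (Fintype.card_fin i)

lemma oscSubspace_le_ann {N i : ℕ} (hN : N ≠ 0) (t : ℂ) :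
    oscSubspace N t i ≤ ann (momentForm N) (oscSubspace N t (N - i)) := by
  rw [oscSubspace, Submodule.span_le]
  rintro _ ⟨a, rfl⟩
  simp only [SetLike.mem_coe, ann, Submodule.mem_comap, Submodule.mem_dualAnnihilator]
  intro w hw
  have hker : oscSubspace N t (N - i) ≤ LinearMap.ker (momentForm N (curveDeriv N a t)) := by
    rw [oscSubspace, Submodule.span_le]
    rintro _ ⟨b, rfl⟩
    exact (momentForm_curveDeriv_eq_zero_iff hN _ _ t).2 (by omega)
  exact hker hw

lemma finrank_ann_add_finrank {V : Type*} [AddCommGroup V] [Module ℂ V] [FiniteDimensional ℂ V]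
    {B : LinearMap.BilinForm ℂ V} (hB : B.Nondegenerate) (W : Submodule ℂ V) :
    finrank ℂ (ann B W) + finrank ℂ W = finrank ℂ V := by
  have : ann B W = W.dualAnnihilator.comap (B.toDual hB : V →ₗ[ℂ] Dual ℂ V) := rfl
  rw [this, Submodule.comap_equiv_eq_map_symm, LinearEquiv.finrank_map_eq, add_comm,
    Subspace.finrank_add_finrank_dualAnnihilator_eq]

lemma momentForm_apply_single {N : ℕ} (x : Fin N → ℂ) (l : Fin N) :
    momentForm N x (Pi.single l 1) = momentCoeff N l.rev * x l.rev := by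
  rw [momentForm_apply, Finset.sum_eq_single l.rev (fun k _ hk => ?_) (by simp)]
  · simp
  · rw [Pi.single_apply, if_neg (fun h => hk (by rw [← h, Fin.rev_rev])), mul_zero]

lemma momentCoeff_ne_zero {N : ℕ} (k : Fin N) : momentCoeff N k ≠ 0 :=
  mul_ne_zero (pow_ne_zero _ (by norm_num))
    (Nat.cast_ne_zero.2 (Nat.choose_pos (by omega)).ne')

lemma momentForm_nondegenerate (N : ℕ) : (momentForm N).Nondegenerate := by
  refine LinearMap.BilinForm.Nondegenerate.ofSeparatingLeft fun x hx => funext fun k => ?_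
  have := hx (Pi.single k.rev 1)
  rw [momentForm_apply_single, Fin.rev_rev] at this
  exact (mul_eq_zero.1 this).resolve_left (by exact_mod_cast momentCoeff_ne_zero k)

lemma momentForm_single_single_im {N : ℕ} (k l : Fin N) :
    (momentForm N (Pi.single k 1) (Pi.single l 1)).im = 0 := by
  rw [momentForm_apply_single, Pi.single_apply]
  split_ifs <;> simp

lemma momentCoeff_rev {N : ℕ} (hN : Even N) (k : Fin N) :
    momentCoeff N k.rev = -momentCoeff N k := by
  have hrev : (k.rev : ℕ) = N - 1 - k := by rw [Fin.val_rev]; omega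
  have hpar : (N - 1 - k) % 2 = 1 - (k : ℕ) % 2 := by obtain ⟨r, hr⟩ := hN; omega
  rw [momentCoeff, momentCoeff, hrev, Nat.choose_symm (by omega), neg_one_pow_eq_pow_mod_two,
    hpar, neg_one_pow_eq_pow_mod_two (k : ℕ)]
  rcases Nat.mod_two_eq_zero_or_one k with h | h <;> simp [h]

lemma momentForm_isAlt {N : ℕ} (hN : Even N) : (momentForm N).IsAlt := by
  intro x
  rw [momentForm_apply, ← self_eq_neg, ← Finset.sum_neg_distrib]
  refine Fintype.sum_equiv Fin.revPerm _ _ fun k => ?_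
  simp only [Fin.revPerm_apply, Fin.rev_rev, momentCoeff_rev hN]
  push_cast
  ring

lemma ann_oscSubspace {N i : ℕ} (hN : N ≠ 0) (hi : i ≤ N) (t : ℂ) :
    ann (momentForm N) (oscSubspace N t (N - i)) = oscSubspace N t i := by
  refine (Submodule.eq_of_le_of_finrank_eq (oscSubspace_le_ann hN t) ?_).symm
  have := finrank_ann_add_finrank (momentForm_nondegenerate N) (oscSubspace N t (N - i))
  rw [finrank_oscSubspace hN (by omega), Module.finrank_fin_fun] at this
  rw [finrank_oscSubspace hN hi]
  omega

theorem stmt11 (m : ℕ) (hm : 1 ≤ m) :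
    ∃ B : LinearMap.BilinForm ℂ (Fin (2 * m) → ℂ), B.IsAlt ∧ B.Nondegenerate ∧
      (∀ k l : Fin (2 * m), (B (Pi.single k 1) (Pi.single l 1)).im = 0) ∧
      ∀ (t : ℂ) (i : ℕ), i ≤ 2 * m →
        ann B (oscSubspace (2 * m) t (2 * m - i)) = oscSubspace (2 * m) t i :=
  ⟨momentForm (2 * m), momentForm_isAlt (even_two_mul m), momentForm_nondegenerate _,
    momentForm_single_single_im, fun _ _ hi => ann_oscSubspace (by omega) hi _⟩
end
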